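/- For n ≥ 2 and δ ≥ 1, the set B_δ = {α ∈ ℝⁿ : ∃C>0, |⟨ξ,α⟩| ≥ C|ξ|^{-(δ-1)} for all nonzero ξ ∈ ℤⁿ} is nonempty if and only if δ ≥ n. -/

import Mathlib

/-!
If `δ < n`, Dirichlet's pigeonhole argument applied to the fractional parts of
`∑_{j ≥ 1} κ_j α_j / α_0` over the `(N+1)^(n-1)` vectors `κ ∈ {0,…,N}^(n-1)` gives, for every `N`,
some `ξ ≠ 0` with `|ξ| = O(N)` and `|⟨ξ, α⟩| = O(N^(-(n-1)))`, which beats the bound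
`C |ξ|^(-(δ-1))` as `N → ∞`.

Conversely, `α = (1, θ, …, θ^(n-1))` with `θ = 2^(1/n)` works for `δ ≥ n`: by Eisenstein `θ` has
degree `n`, so `x = ∑ ξ_j θ^j` is a nonzero algebraic integer of `ℚ(θ)`. Its norm is a nonzero
integer, hence `1 ≤ |N(x)| ≤ |x| · (house x)^(n-1)`, and `house x = O(|ξ|)`.
-/

/-- Euclidean norm of a frequency `ξ ∈ ℤⁿ`. -/
noncomputable def znorm {n : ℕ} (ξ : Fin n → ℤ) : ℝ :=
  Real.sqrt (∑ j, ((ξ j : ℝ)) ^ 2)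

open Filter Finset Polynomial NumberField Module

lemma abs_le_znorm {n : ℕ} (ξ : Fin n → ℤ) (j : Fin n) : |(ξ j : ℝ)| ≤ znorm ξ := by
  rw [← Real.sqrt_sq_eq_abs]
  exact Real.sqrt_le_sqrt <| single_le_sum (f := fun i => (ξ i : ℝ) ^ 2)
    (fun i _ => sq_nonneg _) (mem_univ j)

lemma one_le_znorm {n : ℕ} {ξ : Fin n → ℤ} (hξ : ξ ≠ 0) : 1 ≤ znorm ξ := by
  obtain ⟨j, hj⟩ := Function.ne_iff.1 hξ
  have : (1 : ℝ) ≤ |(ξ j : ℝ)| := by exact_mod_cast Int.one_le_abs hj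
  exact this.trans (abs_le_znorm ξ j)

lemma znorm_pos {n : ℕ} {ξ : Fin n → ℤ} (hξ : ξ ≠ 0) : 0 < znorm ξ :=
  one_pos.trans_le (one_le_znorm hξ)

lemma znorm_le_of_abs_le {n : ℕ} (ξ : Fin n → ℤ) {c : ℝ} (hc : 0 ≤ c)
    (h : ∀ j, |(ξ j : ℝ)| ≤ c) : znorm ξ ≤ Real.sqrt n * c := by
  have hsum : ∑ j, (ξ j : ℝ) ^ 2 ≤ n * c ^ 2 := by
    simpa using sum_le_sum fun j (_ : j ∈ univ) => sq_le_sq' (abs_le.1 (h j)).1 (abs_le.1 (h j)).2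
  calc znorm ξ ≤ Real.sqrt (n * c ^ 2) := Real.sqrt_le_sqrt hsum
    _ = Real.sqrt n * c := by rw [Real.sqrt_mul (Nat.cast_nonneg n), Real.sqrt_sq hc]

lemma exists_ne_abs_fract_sub_fract_lt {ι : Type*} [Fintype ι] (u : ι → ℝ) {M : ℕ}
    (hM0 : M ≠ 0) (hM : M < Fintype.card ι) :
    ∃ a b, a ≠ b ∧ |Int.fract (u a) - Int.fract (u b)| < 1 / M := by
  have hMpos : (0 : ℝ) < M := by positivity
  have hbucket : ∀ a ∈ (univ : Finset ι), ⌊M * Int.fract (u a)⌋₊ ∈ range M := fun a _ => by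
    rw [mem_range, Nat.floor_lt (by positivity)]
    simpa using mul_lt_mul_of_pos_left (Int.fract_lt_one (u a)) hMpos
  obtain ⟨a, -, b, -, hab, hfloor⟩ :=
    exists_ne_map_eq_of_card_lt_of_maps_to (by simpa using hM) hbucket
  refine ⟨a, b, hab, ?_⟩
  have ha := Nat.floor_le (mul_nonneg hMpos.le (Int.fract_nonneg (u a)))
  have hb := Nat.floor_le (mul_nonneg hMpos.le (Int.fract_nonneg (u b)))
  have ha' := Nat.lt_floor_add_one (M * Int.fract (u a))
  have hb' := Nat.lt_floor_add_one (M * Int.fract (u b))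
  rw [hfloor] at ha ha'
  rw [abs_sub_lt_iff]
  constructor <;> rw [lt_div_iff₀ hMpos] <;> linarith

lemma exists_int_abs_add_sum_mul_lt {m : ℕ} (hm : m ≠ 0) (β : Fin m → ℝ) {N : ℕ} (hN : N ≠ 0) :
    ∃ p : ℤ, ∃ q : Fin m → ℤ, q ≠ 0 ∧ (∀ j, |q j| ≤ N) ∧
      |p + ∑ j, q j * β j| < 1 / (N : ℝ) ^ m := by
  set u : (Fin m → Fin (N + 1)) → ℝ := fun κ => ∑ j, ((κ j : ℕ) : ℝ) * β j
  obtain ⟨κ, κ', hκ, hclose⟩ := exists_ne_abs_fract_sub_fract_lt u (M := N ^ m)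
    (pow_ne_zero m hN) (by simpa using Nat.pow_lt_pow_left (lt_add_one N) hm)
  refine ⟨⌊u κ'⌋ - ⌊u κ⌋, fun j => (κ j : ℤ) - (κ' j : ℤ), ?_, fun j => ?_, ?_⟩
  · obtain ⟨j, hj⟩ := Function.ne_iff.1 hκ
    exact Function.ne_iff.2 ⟨j, by simpa [sub_eq_zero, Fin.val_inj] using hj⟩
  · have hκj := (κ j).is_lt
    have hκ'j := (κ' j).is_lt
    rw [abs_le]
    dsimp only
    constructor <;> omega
  · convert hclose using 2
    · simp only [Int.fract, u]
      push_cast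
      simp only [sub_mul, sum_sub_distrib]
      ring
    · push_cast; rfl

lemma sum_cons_mul_eq_mul_add_sum_mul_div {m : ℕ} (α : Fin (m + 1) → ℝ) (hα : α 0 ≠ 0) (p : ℤ)
    (q : Fin m → ℤ) : ∑ j, ((Fin.cons p q : Fin (m + 1) → ℤ) j : ℝ) * α j
      = α 0 * (p + ∑ j, q j * (α j.succ / α 0)) := by
  rw [Fin.sum_univ_succ, mul_add, mul_sum]
  simp only [Fin.cons_zero, Fin.cons_succ]
  congr 1
  · ring
  · refine sum_congr rfl fun j _ => ?_
    field_simp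

lemma exists_ne_zero_znorm_le_abs_sum_mul_le {m : ℕ} (hm : m ≠ 0) (α : Fin (m + 1) → ℝ)
    (hα : α 0 ≠ 0) : ∃ A > 0, ∀ N : ℕ, N ≠ 0 → ∃ ξ : Fin (m + 1) → ℤ, ξ ≠ 0 ∧
      znorm ξ ≤ A * N ∧ |∑ j, (ξ j : ℝ) * α j| ≤ |α 0| / (N : ℝ) ^ m := by
  set β : Fin m → ℝ := fun j => α j.succ / α 0
  set B := ∑ j, |β j|
  have hB : 0 ≤ B := sum_nonneg fun j _ => abs_nonneg _
  refine ⟨Real.sqrt (m + 1) * (B + 1), by positivity, fun N hN => ?_⟩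
  obtain ⟨p, q, hq, hqN, hpq⟩ := exists_int_abs_add_sum_mul_lt hm β hN
  have hN1 : (1 : ℝ) ≤ N := by exact_mod_cast Nat.one_le_iff_ne_zero.2 hN
  have hsumβ : |∑ j, (q j : ℝ) * β j| ≤ N * B := by
    calc |∑ j, (q j : ℝ) * β j| ≤ ∑ j, |(q j : ℝ)| * |β j| := by
          simpa only [abs_mul] using abs_sum_le_sum_abs (fun j => (q j : ℝ) * β j) univ
      _ ≤ ∑ j, (N : ℝ) * |β j| := by
          gcongr with j; exact_mod_cast hqN j
      _ = N * B := by rw [mul_sum]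
  refine ⟨Fin.cons p q, fun h => hq (funext fun j => by simpa using congrFun h j.succ), ?_, ?_⟩
  · have hbound : ∀ j, |((Fin.cons p q : Fin (m + 1) → ℤ) j : ℝ)| ≤ N * (B + 1) := by
      refine Fin.cases ?_ (fun j => ?_)
      · have hp := abs_sub ((p : ℝ) + ∑ j, q j * β j) (∑ j, q j * β j)
        simp only [add_sub_cancel_right] at hp
        have hpow : 1 / (N : ℝ) ^ m ≤ 1 := div_le_one_of_le₀ (one_le_pow₀ hN1) (by positivity)
        simp only [Fin.cons_zero]
        linarith
      · have hqj : |(q j : ℝ)| ≤ N := by exact_mod_cast hqN j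
        simp only [Fin.cons_succ]
        exact hqj.trans (le_mul_of_one_le_right (Nat.cast_nonneg N) (by linarith))
    calc znorm _ ≤ Real.sqrt ↑(m + 1) * (N * (B + 1)) := znorm_le_of_abs_le _ (by positivity) hbound
      _ = _ := by push_cast; ring
  · rw [sum_cons_mul_eq_mul_add_sum_mul_div α hα, abs_mul, div_eq_mul_one_div]
    exact mul_le_mul_of_nonneg_left hpq.le (abs_nonneg _)

lemma nonpos_of_forall_mul_rpow_le {c e K : ℝ} (hc : 0 < c)
    (h : ∀ N : ℕ, N ≠ 0 → c * (N : ℝ) ^ e ≤ K) : e ≤ 0 := by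
  by_contra! he
  have hlim : Tendsto (fun N : ℕ => c * (N : ℝ) ^ e) atTop atTop :=
    ((tendsto_rpow_atTop he).comp tendsto_natCast_atTop_atTop).const_mul_atTop hc
  obtain ⟨N, hNK, hN⟩ := ((hlim.eventually_gt_atTop K).and (eventually_ne_atTop 0)).exists
  exact (h N hN).not_gt hNK

lemma le_of_forall_mul_znorm_rpow_le_abs_sum_mul {m : ℕ} (hm : m ≠ 0) {δ : ℝ} (hδ : 1 ≤ δ)
    (α : Fin (m + 1) → ℝ) {C : ℝ} (hC : 0 < C)
    (h : ∀ ξ : Fin (m + 1) → ℤ, ξ ≠ 0 → C * znorm ξ ^ (-(δ - 1)) ≤ |∑ j, (ξ j : ℝ) * α j|) :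
    ((m + 1 : ℕ) : ℝ) ≤ δ := by
  have hα : α 0 ≠ 0 := by
    intro hα
    have hξ : (Pi.single 0 1 : Fin (m + 1) → ℤ) ≠ 0 := by simp
    have hpos : 0 < C * znorm (Pi.single 0 1 : Fin (m + 1) → ℤ) ^ (-(δ - 1)) := by
      have := znorm_pos hξ
      positivity
    have hzero : ∑ j, ((Pi.single 0 1 : Fin (m + 1) → ℤ) j : ℝ) * α j = 0 := by
      simp [Pi.single_apply, hα]
    have := h _ hξ
    rw [hzero, abs_zero] at this
    linarith
  obtain ⟨A, hA, hsmall⟩ := exists_ne_zero_znorm_le_abs_sum_mul_le hm α hα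
  suffices ((m + 1 : ℕ) : ℝ) - δ ≤ 0 by linarith
  refine nonpos_of_forall_mul_rpow_le (c := C * A ^ (-(δ - 1))) (K := |α 0|) (by positivity)
    fun N hN => ?_
  obtain ⟨ξ, hξ, hξA, hξα⟩ := hsmall N hN
  have hNpos : (0 : ℝ) < N := by positivity
  have hdecay : C * (A * N) ^ (-(δ - 1)) ≤ |α 0| / (N : ℝ) ^ m :=
    calc C * (A * N) ^ (-(δ - 1)) ≤ C * znorm ξ ^ (-(δ - 1)) :=
          mul_le_mul_of_nonneg_left
            (Real.rpow_le_rpow_of_nonpos (znorm_pos hξ) hξA (by linarith)) hC.le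
      _ ≤ |α 0| / (N : ℝ) ^ m := (h ξ hξ).trans hξα
  have hexp : (N : ℝ) ^ (((m + 1 : ℕ) : ℝ) - δ) = (N : ℝ) ^ (-(δ - 1)) * (N : ℝ) ^ m := by
    rw [← Real.rpow_natCast, ← Real.rpow_add hNpos]
    push_cast
    ring_nf
  calc C * A ^ (-(δ - 1)) * (N : ℝ) ^ (((m + 1 : ℕ) : ℝ) - δ)
      = C * (A * N) ^ (-(δ - 1)) * (N : ℝ) ^ m := by
        rw [hexp, Real.mul_rpow hA.le hNpos.le]
        ring
    _ ≤ |α 0| := by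
        rwa [← le_div_iff₀ (by positivity)]

lemma irreducible_X_pow_sub_C_two {n : ℕ} (hn : n ≠ 0) : Irreducible (X ^ n - C 2 : ℚ[X]) := by
  have hmonic : (X ^ n - C 2 : ℤ[X]).Monic := monic_X_pow_sub_C 2 hn
  have hprime : (Ideal.span {(2 : ℤ)}).IsPrime :=
    (Ideal.span_singleton_prime two_ne_zero).2 Int.prime_two
  have hdeg : (X ^ n - C 2 : ℤ[X]).natDegree = n := natDegree_X_pow_sub_C
  have heis : (X ^ n - C 2 : ℤ[X]).IsEisensteinAt (Ideal.span {(2 : ℤ)}) := by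
    refine ⟨?_, fun {i} hi => ?_, ?_⟩
    · rw [hmonic.leadingCoeff, Ideal.mem_span_singleton]
      decide
    · rw [hdeg] at hi
      rw [Ideal.mem_span_singleton, coeff_sub, coeff_X_pow, coeff_C, if_neg hi.ne]
      split_ifs <;> simp
    · rw [Ideal.span_singleton_pow, Ideal.mem_span_singleton, coeff_sub, coeff_X_pow, coeff_C,
        if_neg (Ne.symm hn), if_pos rfl]
      decide
  have := (IsPrimitive.Int.irreducible_iff_irreducible_map_cast hmonic.isPrimitive).1
    (heis.irreducible hprime hmonic.isPrimitive (by omega))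
  convert this
  simp [C_ofNat]

lemma minpoly_two_rpow_inv_natCast {n : ℕ} (hn : n ≠ 0) :
    minpoly ℚ ((2 : ℝ) ^ (n⁻¹ : ℝ)) = X ^ n - C 2 := by
  refine (minpoly.eq_of_irreducible_of_monic (irreducible_X_pow_sub_C_two hn) ?_
    (monic_X_pow_sub_C 2 hn)).symm
  simp [Real.rpow_inv_natCast_pow zero_le_two hn]

section NumberField

variable {K : Type*} [Field K] [NumberField K]

lemma one_le_norm_norm_of_isIntegral {x : K} (hx : IsIntegral ℤ x) (hx0 : x ≠ 0) :
    1 ≤ ‖Algebra.norm ℚ x‖ := by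
  obtain ⟨m, hm⟩ := IsIntegrallyClosed.isIntegral_iff.1 (Algebra.isIntegral_norm ℚ hx)
  have hm0 : m ≠ 0 := by
    rintro rfl
    exact Algebra.norm_ne_zero_iff.2 hx0 (by rw [← hm, map_zero])
  rw [← hm, eq_intCast, ← Rat.norm_cast_real, Rat.cast_intCast, Real.norm_eq_abs]
  exact_mod_cast Int.one_le_abs hm0

lemma house_sum_intCast_mul_le {n : ℕ} (ξ : Fin n → ℤ) (b : Fin n → K) :
    house (∑ j, (ξ j : K) * b j) ≤ znorm ξ * ∑ j, house (b j) :=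
  calc house (∑ j, (ξ j : K) * b j) ≤ ∑ j, house ((ξ j : K) * b j) := house_sum_le_sum_house _ _
    _ ≤ ∑ j, |(ξ j : ℝ)| * house (b j) := by
        gcongr with j
        simpa using house_mul_le (ξ j : K) (b j)
    _ ≤ ∑ j, znorm ξ * house (b j) := by
        gcongr with j
        · exact house_nonneg _
        · exact abs_le_znorm ξ j
    _ = znorm ξ * ∑ j, house (b j) := by rw [mul_sum]

lemma exists_pos_le_norm_sum_mul_znorm_pow (σ : K →+* ℂ) {n : ℕ} {b : Fin n → K}
    (hb : LinearIndependent ℚ b) (hbint : ∀ j, IsIntegral ℤ (b j)) :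
    ∃ c > 0, ∀ ξ : Fin n → ℤ, ξ ≠ 0 →
      c ≤ ‖∑ j, (ξ j : ℂ) * σ (b j)‖ * znorm ξ ^ (finrank ℚ K - 1) := by
  set M := 1 + ∑ j, house (b j)
  have hM : 0 < M := by
    have := sum_nonneg fun j (_ : j ∈ univ) => house_nonneg (b j)
    positivity
  refine ⟨(M ^ (finrank ℚ K - 1))⁻¹, by positivity, fun ξ hξ => ?_⟩
  set x := ∑ j, (ξ j : K) * b j
  have hx0 : x ≠ 0 := by
    intro hx
    refine hξ (funext (Fintype.linearIndependent_iff.1 (hb.restrict_scalars' ℤ) ξ ?_))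
    simpa only [zsmul_eq_mul] using hx
  have hxint : IsIntegral ℤ x :=
    IsIntegral.sum _ fun j _ => (isIntegral_algebraMap (x := ξ j)).mul (hbint j)
  have hσx : σ x = ∑ j, (ξ j : ℂ) * σ (b j) := by simp [x]
  have hhouse : house x ≤ znorm ξ * M := (house_sum_intCast_mul_le ξ b).trans
    (mul_le_mul_of_nonneg_left (le_add_of_nonneg_left zero_le_one) (Real.sqrt_nonneg _))
  rw [inv_le_iff_one_le_mul₀ (by positivity), ← hσx]
  calc 1 ≤ ‖Algebra.norm ℚ x‖ := one_le_norm_norm_of_isIntegral hxint hx0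
    _ ≤ ‖σ x‖ * house x ^ (finrank ℚ K - 1) := norm_norm_le_norm_mul_house_pow x σ
    _ ≤ ‖σ x‖ * (znorm ξ * M) ^ (finrank ℚ K - 1) := by gcongr; exact house_nonneg x
    _ = ‖σ x‖ * znorm ξ ^ (finrank ℚ K - 1) * M ^ (finrank ℚ K - 1) := by
      rw [mul_pow, mul_assoc]

end NumberField

open IntermediateField in
lemma exists_pos_le_abs_sum_mul_znorm_pow {n : ℕ} (hn : n ≠ 0) :
    ∃ α : Fin n → ℝ, ∃ c > 0, ∀ ξ : Fin n → ℤ, ξ ≠ 0 →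
      c ≤ |∑ j, (ξ j : ℝ) * α j| * znorm ξ ^ (n - 1) := by
  set θ : ℝ := 2 ^ (n⁻¹ : ℝ)
  have hmin : minpoly ℚ θ = X ^ n - C 2 := minpoly_two_rpow_inv_natCast hn
  have hθint : IsIntegral ℚ θ := by
    refine ⟨X ^ n - C 2, monic_X_pow_sub_C 2 hn, ?_⟩
    rw [← hmin, ← aeval_def, minpoly.aeval]
  have : FiniteDimensional ℚ ℚ⟮θ⟯ := adjoin.finiteDimensional hθint
  have : NumberField ℚ⟮θ⟯ := ⟨⟩
  set g := AdjoinSimple.gen ℚ θ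
  have hgn : g ^ n = 2 := Subtype.ext <|
    (Real.rpow_inv_natCast_pow zero_le_two hn).trans (map_ofNat (algebraMap ℚ⟮θ⟯ ℝ) 2).symm
  have hgint : IsIntegral ℤ g := ⟨X ^ n - C 2, monic_X_pow_sub_C 2 hn, by simp [hgn]⟩
  have hdeg : (minpoly ℚ g).natDegree = n := by
    rw [show minpoly ℚ g = minpoly ℚ θ from minpoly_gen ℚ θ, hmin, natDegree_X_pow_sub_C]
  have hrank : finrank ℚ ℚ⟮θ⟯ = n := by rw [adjoin.finrank hθint, hmin, natDegree_X_pow_sub_C]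
  obtain ⟨c, hc, hbound⟩ := exists_pos_le_norm_sum_mul_znorm_pow
    ((algebraMap ℝ ℂ).comp (algebraMap ℚ⟮θ⟯ ℝ))
    ((linearIndependent_pow g).comp (Fin.cast hdeg.symm) (Fin.cast_injective _))
    (fun j => hgint.pow _)
  refine ⟨fun j => θ ^ (j : ℕ), c, hc, fun ξ hξ => ?_⟩
  convert hbound ξ hξ using 2
  · rw [← Real.norm_eq_abs, ← Complex.norm_real, Complex.ofReal_sum]
    simp [g]
  · rw [hrank]

theorem stmt8 {n : ℕ} (hn : 2 ≤ n) (δ : ℝ) (hδ : 1 ≤ δ) :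
    (∃ α : Fin n → ℝ, ∃ C > 0, ∀ ξ : Fin n → ℤ, ξ ≠ 0 →
      |∑ j, (ξ j : ℝ) * α j| ≥ C * znorm ξ ^ (-(δ - 1))) ↔ (n : ℝ) ≤ δ := by
  constructor
  · rintro ⟨α, C, hC, h⟩
    obtain ⟨m, rfl⟩ : ∃ m, n = m + 1 := ⟨n - 1, by omega⟩
    exact le_of_forall_mul_znorm_rpow_le_abs_sum_mul (by omega) hδ α hC h
  · intro hnδ
    obtain ⟨α, c, hc, h⟩ := exists_pos_le_abs_sum_mul_znorm_pow (n := n) (by omega)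
    refine ⟨α, c, hc, fun ξ hξ => ?_⟩
    have hdecay : znorm ξ ^ (-(δ - 1)) ≤ (znorm ξ ^ (n - 1))⁻¹ := by
      rw [← Real.rpow_natCast, ← Real.rpow_neg (znorm_pos hξ).le]
      refine Real.rpow_le_rpow_of_exponent_le (one_le_znorm hξ) ?_
      push_cast [Nat.cast_sub (by omega : 1 ≤ n)]
      linarith
    calc c * znorm ξ ^ (-(δ - 1)) ≤ c * (znorm ξ ^ (n - 1))⁻¹ :=
          mul_le_mul_of_nonneg_left hdecay hc.le
      _ ≤ |∑ j, (ξ j : ℝ) * α j| := by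
          rw [← div_eq_mul_inv, div_le_iff₀ (pow_pos (znorm_pos hξ) _)]
          exact h ξ hξ
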